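/- arXiv:1303.6889 — 6 statements merged into one kernel-verified Lean document; each statement's English description precedes it below -/
import Mathlib

section
/- Let (G_i)_{i ∈ ι} be a family of groups, let i₀ ∈ ι, and let A be the range of the canonical homomorphism G_{i₀} →* Monoid.CoprodI G into the free product of the family. Then A is malnormal in the free product: for every element x of Monoid.CoprodI G, if x A x⁻¹ ∩ A ≠ {1} then x ∈ A. -/
/-!
Write `x = a * t` with `a ∈ G i₀` and the reduced word of `t` not beginning with a letter of
`G i₀`. If `x g x⁻¹ ∈ G i₀` with `g ≠ 1`, then `t g t⁻¹ = k` for some `k ≠ 1` in `G i₀`, i.e.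
`t g = k t`. The reduced word of `k t` begins in `G i₀`, while right multiplication by `g` only
touches the last letter of `t`, so `t g` begins like `t` unless `t g` itself lies in `G i₀`.
Hence `t ∈ G i₀`, and then `t = 1`.
-/

namespace Monoid.CoprodI.Word

variable {ι : Type*} {G : ι → Type*} [∀ i, Group (G i)] [DecidableEq ι] [∀ i, DecidableEq (G i)]

@[simp]
theorem equiv_prod (w : Word G) : equiv w.prod = w :=
  equiv.apply_symm_apply w

@[simp]
theorem prod_equiv (x : CoprodI G) : (equiv x).prod = x :=
  equiv.symm_apply_apply x

theorem equiv_mul (x y : CoprodI G) : equiv (x * y) = x • equiv y :=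
  mul_smul x y (empty : Word G)

theorem fstIdx_of_smul {i : ι} {m : G i} {w : Word G} (hw : fstIdx w ≠ some i) (hm : m ≠ 1) :
    fstIdx (of m • w) = some i := by
  rw [← cons_eq_smul (h1 := hw) (h2 := hm), fstIdx_cons]

theorem fstIdx_equiv_of {i : ι} (m : G i) :
    fstIdx (equiv (of m : CoprodI G)) = if m = 1 then none else some i := by
  split_ifs with hm
  · simp [hm, equiv, fstIdx, empty]
  · exact fstIdx_of_smul (by simp [fstIdx, empty]) hm

theorem fstIdx_equiv_mul_of {i : ι} (g : G i) (w : Word G) :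
    fstIdx (equiv (w.prod * of g)) = fstIdx w ∨
      w.prod * of g ∈ (of : G i →* CoprodI G).range := by
  induction w using consRecOn with
  | empty => exact Or.inr ⟨g, by simp⟩
  | cons j m w hw hm ih =>
    rw [prod_cons, mul_assoc, equiv_mul, fstIdx_cons]
    rcases ih with ih | ⟨k, hk⟩
    · exact Or.inl (fstIdx_of_smul (ih ▸ hw) hm)
    · rw [← hk]
      by_cases hji : j = i
      · subst hji
        exact Or.inr ⟨m * k, map_mul _ _ _⟩
      · refine Or.inl (fstIdx_of_smul ?_ hm)
        rw [fstIdx_equiv_of]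
        split_ifs <;> simp [Ne.symm hji]

theorem eq_one_of_mul_of_mul_inv_mem_range {i : ι} {t : CoprodI G}
    (ht : fstIdx (equiv t) ≠ some i) {g : G i} (hg : g ≠ 1)
    (h : t * of g * t⁻¹ ∈ (of : G i →* CoprodI G).range) : t = 1 := by
  obtain ⟨k, hk⟩ := h
  have hk1 : k ≠ 1 := by
    rintro rfl
    rw [map_one, eq_comm, mul_inv_eq_one, mul_eq_left, ← map_one of] at hk
    exact hg (of_injective i hk)
  have hcomm : t * of g = of k * t := by rw [hk]; group
  rcases fstIdx_equiv_mul_of g (equiv t) with hfst | ⟨l, hl⟩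
  · rw [prod_equiv, hcomm, equiv_mul, fstIdx_of_smul ht hk1] at hfst
    exact absurd hfst.symm ht
  · rw [prod_equiv] at hl
    have htl : t = of (l * g⁻¹) := by
      rw [map_mul, map_inv]
      exact eq_mul_inv_of_mul_eq hl.symm
    rw [htl, fstIdx_equiv_of, ite_ne_right_iff] at ht
    rw [htl, ht.1, map_one]

theorem exists_eq_of_mul_of_fstIdx_ne (i : ι) (x : CoprodI G) :
    ∃ a : G i, ∃ t : CoprodI G, fstIdx (equiv t) ≠ some i ∧ x = of a * t := by
  set p := equivPair i (equiv x)
  refine ⟨p.head, p.tail.prod, ?_, ?_⟩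
  · rw [equiv_prod]
    exact p.fstIdx_ne
  · rw [← prod_rcons, ← equivPair_symm, Equiv.symm_apply_apply, prod_equiv]

end Monoid.CoprodI.Word

namespace Monoid.CoprodI

variable {ι : Type*} {G : ι → Type*} [∀ i, Group (G i)]

theorem mem_range_of_conj_of_mem_range {i : ι} {x : CoprodI G} {g : G i} (hg : g ≠ 1)
    (h : x * of g * x⁻¹ ∈ (of : G i →* CoprodI G).range) : x ∈ (of : G i →* CoprodI G).range := by
  classical
  obtain ⟨a, t, ht, rfl⟩ := Word.exists_eq_of_mul_of_fstIdx_ne i x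
  obtain ⟨k, hk⟩ := h
  have ht1 : t = 1 := by
    refine Word.eq_one_of_mul_of_mul_inv_mem_range ht hg ⟨a⁻¹ * k * a, ?_⟩
    rw [map_mul, map_mul, hk, map_inv]
    group
  exact ⟨a, by rw [ht1, mul_one]⟩

end Monoid.CoprodI

/-- A free factor of a free product is malnormal: if `A` is the image of one of the
canonical homomorphisms `G i₀ →* Monoid.CoprodI G`, then for every `x` in the free
product, `x A x⁻¹ ⊓ A ≠ ⊥` implies `x ∈ A`. -/
theorem coprodI_factor_malnormal {ι : Type*} (G : ι → Type*) [∀ i, Group (G i)]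
    (i₀ : ι) (A : Subgroup (Monoid.CoprodI G))
    (hA : A = (Monoid.CoprodI.of : G i₀ →* Monoid.CoprodI G).range) :
    ∀ x : Monoid.CoprodI G,
      Subgroup.map (MulAut.conj x).toMonoidHom A ⊓ A ≠ ⊥ → x ∈ A := by
  subst hA
  intro x hx
  obtain ⟨_, ⟨⟨_, ⟨g, rfl⟩, rfl⟩, hmem⟩, hne⟩ :=
    (Subgroup.bot_or_exists_ne_one _).resolve_left hx
  have hg : g ≠ 1 := by
    rintro rfl
    simp at hne
  exact Monoid.CoprodI.mem_range_of_conj_of_mem_range hg hmem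
end

section
/- Let G be a group, let A and B be subgroups of G with B malnormal, and let g, h ∈ G be such that A ∩ g B g⁻¹ ≠ {1}. Then there exists a ∈ A with a (A ∩ g B g⁻¹) a⁻¹ = A ∩ h B h⁻¹ if and only if the double cosets A g B and A h B coincide. -/
/-!
If `a ∈ A` conjugates `A ∩ gBg⁻¹` onto `A ∩ hBh⁻¹`, then `A ∩ (ag)B(ag)⁻¹ = A ∩ hBh⁻¹` is a
nontrivial subgroup of both `(ag)B(ag)⁻¹` and `hBh⁻¹`; malnormality of `B` forces
`h⁻¹ag ∈ B`, i.e. `g ∈ AhB`. Conversely, if `g = ahb` then conjugation by `a⁻¹` works, since `b`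
normalises `B`.
-/

open DoubleCoset

namespace Subgroup

variable {G : Type*} [Group G]

def IsMalnormal (B : Subgroup G) : Prop :=
  ∀ x : G, B.map (MulAut.conj x).toMonoidHom ⊓ B ≠ ⊥ → x ∈ B

lemma map_conj_mul (H : Subgroup G) (x y : G) :
    H.map (MulAut.conj (x * y)).toMonoidHom =
      (H.map (MulAut.conj y).toMonoidHom).map (MulAut.conj x).toMonoidHom := by
  rw [map_map]
  congr 1
  ext
  simp [mul_assoc]

lemma map_conj_eq_self_of_mem {H : Subgroup G} {x : G} (hx : x ∈ H) :
    H.map (MulAut.conj x).toMonoidHom = H :=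
  mem_normalizer_iff_map_conj_eq.mp (le_normalizer hx)

lemma map_conj_ne_bot {H : Subgroup G} (hH : H ≠ ⊥) (x : G) :
    H.map (MulAut.conj x).toMonoidHom ≠ ⊥ :=
  (map_eq_bot_iff_of_injective H (MulAut.conj x).injective).not.mpr hH

lemma map_conj_inf_of_mem (A B : Subgroup G) {a : G} (ha : a ∈ A) (g : G) :
    (A ⊓ B.map (MulAut.conj g).toMonoidHom).map (MulAut.conj a).toMonoidHom =
      A ⊓ B.map (MulAut.conj (a * g)).toMonoidHom := by
  rw [map_inf _ _ _ (MulAut.conj a).injective, map_conj_eq_self_of_mem ha, map_conj_mul]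

lemma IsMalnormal.inv_mul_mem {B : Subgroup G} (hB : B.IsMalnormal) {g h : G}
    (hgh : B.map (MulAut.conj g).toMonoidHom ⊓ B.map (MulAut.conj h).toMonoidHom ≠ ⊥) :
    h⁻¹ * g ∈ B := by
  apply hB
  have hconj := map_conj_ne_bot hgh h⁻¹
  rwa [map_inf _ _ _ (MulAut.conj h⁻¹).injective, ← map_conj_mul, ← map_conj_mul,
    inv_mul_cancel, map_conj_eq_self_of_mem B.one_mem] at hconj

end Subgroup

namespace DoubleCoset

lemma doubleCoset_eq_iff_mem {G : Type*} [Group G] {H K : Subgroup G} {a b : G} :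
    doubleCoset a H K = doubleCoset b H K ↔ a ∈ doubleCoset b H K :=
  ⟨fun h => h ▸ mem_doubleCoset_self H K a, doubleCoset_eq_of_mem⟩

end DoubleCoset

open Subgroup

/-- Let `A`, `B` be subgroups of `G` with `B` malnormal, and `g h : G` with
`A ⊓ g B g⁻¹ ≠ ⊥`. Then `A ∩ g B g⁻¹` is conjugate in `A` to `A ∩ h B h⁻¹`
if and only if the double cosets `A g B` and `A h B` coincide. -/
theorem conjugate_intersection_iff_doubleCoset {G : Type*} [Group G]
    (A B : Subgroup G)
    (hmal : ∀ x : G, Subgroup.map (MulAut.conj x).toMonoidHom B ⊓ B ≠ ⊥ → x ∈ B)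
    (g h : G)
    (hne : A ⊓ Subgroup.map (MulAut.conj g).toMonoidHom B ≠ ⊥) :
    (∃ a ∈ A,
        Subgroup.map (MulAut.conj a).toMonoidHom
            (A ⊓ Subgroup.map (MulAut.conj g).toMonoidHom B) =
          A ⊓ Subgroup.map (MulAut.conj h).toMonoidHom B) ↔
      {x : G | ∃ a ∈ A, ∃ b ∈ B, x = a * g * b} =
        {x : G | ∃ a ∈ A, ∃ b ∈ B, x = a * h * b} := by
  have hdc (x : G) : {y : G | ∃ a ∈ A, ∃ b ∈ B, y = a * x * b} = doubleCoset x A B :=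
    Set.ext fun _ => mem_doubleCoset.symm
  rw [hdc, hdc, doubleCoset_eq_iff_mem, mem_doubleCoset]
  constructor
  · rintro ⟨a, ha, hconj⟩
    have hne' := map_conj_ne_bot hne a
    rw [map_conj_inf_of_mem A B ha] at hconj hne'
    have hmem : h⁻¹ * (a * g) ∈ B := IsMalnormal.inv_mul_mem (B := B) hmal <|
      ne_bot_of_le_ne_bot hne' (le_inf inf_le_right (hconj ▸ inf_le_right))
    exact ⟨a⁻¹, A.inv_mem ha, _, hmem, by group⟩
  · rintro ⟨a, ha, b, hb, rfl⟩
    refine ⟨a⁻¹, A.inv_mem ha, ?_⟩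
    rw [map_conj_inf_of_mem A B (A.inv_mem ha), show a⁻¹ * (a * h * b) = h * b by group,
      map_conj_mul, map_conj_eq_self_of_mem hb]
end

section
/- Let F₃ = FreeGroup (Fin 3) with free generators a, b, c. For all natural numbers i < j, the intersection of the subgroup generated by {a, bⁱ·c} and the subgroup generated by {a, bʲ·c} is exactly the cyclic subgroup generated by a: Subgroup.closure {a, bⁱ*c} ⊓ Subgroup.closure {a, bʲ*c} = Subgroup.closure {a}. -/
/-!
The homomorphism `F₃ → F₂` fixing `a`, `b` and sending `c ↦ b⁻ⁱ` kills `bⁱc`, so it maps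
`⟨a, bⁱc⟩` into `⟨a⟩`. On `⟨a, bʲc⟩` it is `a ↦ a, bʲc ↦ bʲ⁻ⁱ`, which is injective because
`a` and `bʲ⁻ⁱ` generate a free group (ping-pong on reduced words). So an element of both
subgroups, written as a word in `a` and `bʲc`, has image a power `aⁿ` and must be the word `aⁿ`.
-/

open FreeGroup Function

namespace FreeGroup

variable {α : Type*} [DecidableEq α]

theorem toWord_mk_singleton_mul {x : α} {b : Bool} {w : FreeGroup α}
    (hw : w.toWord.head? ≠ some (x, !b)) :
    (mk [(x, b)] * w).toWord = (x, b) :: w.toWord := by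
  have hmk : mk [(x, b)] * w = mk ((x, b) :: w.toWord) := by
    conv_lhs => rw [← mk_toWord (x := w)]
    rw [mul_mk, List.singleton_append]
  rw [hmk, toWord_mk]
  refine IsReduced.reduce_eq ?_
  rcases hL : w.toWord with _ | ⟨⟨y, c⟩, L⟩
  · exact IsReduced.singleton
  · rw [isReduced_cons_cons, ← hL]
    refine ⟨?_, isReduced_toWord⟩
    rintro (rfl : x = y)
    rw [hL] at hw
    cases b <;> cases c <;> simp_all

theorem toWord_mk_singleton_pow_mul {x : α} {b : Bool} {w : FreeGroup α}
    (hw : w.toWord.head? ≠ some (x, !b)) (n : ℕ) :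
    (mk [(x, b)] ^ n * w).toWord = List.replicate n (x, b) ++ w.toWord := by
  induction n with
  | zero => simp
  | succ n ih =>
    have hhead : (mk [(x, b)] ^ n * w).toWord.head? ≠ some (x, !b) := by
      rw [ih]; cases n <;> simp [hw, List.replicate_succ]
    rw [pow_succ', mul_assoc, toWord_mk_singleton_mul hhead, ih]
    rfl

theorem head?_toWord_mk_singleton_pow_mul {x : α} {b : Bool} {w : FreeGroup α}
    (hw : w.toWord.head? ≠ some (x, !b)) {n : ℕ} (hn : n ≠ 0) :
    (mk [(x, b)] ^ n * w).toWord.head? = some (x, b) := by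
  obtain ⟨n, rfl⟩ := Nat.exists_eq_succ_of_ne_zero hn
  rw [toWord_mk_singleton_pow_mul hw, List.replicate_succ, List.cons_append, List.head?_cons]

open scoped Pointwise in
theorem injective_lift_of_pow [Nontrivial α] (e : α → ℕ) (he : ∀ x, e x ≠ 0) :
    Injective (lift fun x => of x ^ e x) := by
  refine injective_lift_of_ping_pong _
    (fun x => {w : FreeGroup α | w.toWord.head? = some (x, true)})
    (fun x => {w : FreeGroup α | w.toWord.head? = some (x, false)})
    (fun x => ⟨of x, rfl⟩) ?_ ?_ ?_ ?_ ?_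
  · intro x y hxy
    exact Set.disjoint_left.2 fun w hx hy => hxy (by simp_all)
  · intro x y hxy
    exact Set.disjoint_left.2 fun w hx hy => hxy (by simp_all)
  · intro x y
    exact Set.disjoint_left.2 fun w hx hy => by simp_all
  · rintro x _ ⟨w, hw, rfl⟩
    exact head?_toWord_mk_singleton_pow_mul (b := true) hw (he x)
  · rintro x _ ⟨w, hw, rfl⟩
    change ((of x ^ e x)⁻¹ * w).toWord.head? = _
    rw [← inv_pow]
    exact head?_toWord_mk_singleton_pow_mul (b := false) hw (he x)

end FreeGroup

section Closure

variable {G H : Type*} [Group G] [Group H]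

theorem map_mem_closure_singleton_of_map_eq_one (k : G →* H) {a s x : G} (hs : k s = 1)
    (hx : x ∈ Subgroup.closure {a, s}) : k x ∈ Subgroup.closure {k a} := by
  refine (Subgroup.closure_le ((Subgroup.closure {k a}).comap k)).2 ?_ hx
  rw [Set.insert_subset_iff, Set.singleton_subset_iff]
  exact ⟨Subgroup.subset_closure rfl, by simp [hs]⟩

theorem mem_closure_singleton_of_injective_comp_lift (k : G →* H) {a s x : G}
    (hk : Injective (k.comp (lift ![a, s]))) (hx : x ∈ Subgroup.closure {a, s})
    (hkx : k x ∈ Subgroup.closure {k a}) : x ∈ Subgroup.closure {a} := by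
  rw [← Matrix.range_cons_cons_empty a s ![], ← range_lift_eq_closure] at hx
  obtain ⟨u, rfl⟩ := hx
  obtain ⟨n, hn⟩ := Subgroup.mem_closure_singleton.1 hkx
  have hu : u = of 0 ^ n := hk (by simp [← hn])
  exact Subgroup.mem_closure_singleton.2 ⟨n, by simp [hu]⟩

end Closure

/-- In the free group `F₃ = ⟨a, b, c⟩`, for naturals `i < j`,
`⟨a, bⁱc⟩ ∩ ⟨a, bʲc⟩ = ⟨a⟩`. -/
theorem closure_inf_eq_closure_singleton {i j : ℕ} (hij : i < j) :
    Subgroup.closure {FreeGroup.of (0 : Fin 3),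
        (FreeGroup.of (1 : Fin 3)) ^ i * FreeGroup.of (2 : Fin 3)} ⊓
      Subgroup.closure {FreeGroup.of (0 : Fin 3),
        (FreeGroup.of (1 : Fin 3)) ^ j * FreeGroup.of (2 : Fin 3)} =
      Subgroup.closure {FreeGroup.of (0 : Fin 3)} := by
  let k : FreeGroup (Fin 3) →* FreeGroup (Fin 2) := lift ![of 0, of 1, (of 1 ^ i)⁻¹]
  have hk_comp : k.comp (lift ![of 0, of 1 ^ j * of 2]) = lift fun t => of t ^ ![1, j - i] t := by
    ext t
    fin_cases t
    · simp [k]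
    · simp [k, pow_sub _ hij.le]
  refine le_antisymm ?_ (le_inf ?_ ?_)
  · rintro x ⟨hxi, hxj⟩
    refine mem_closure_singleton_of_injective_comp_lift k ?_ hxj
      (map_mem_closure_singleton_of_map_eq_one k (by simp [k]) hxi)
    rw [hk_comp]
    exact injective_lift_of_pow _
      (Fin.forall_fin_two.2 ⟨one_ne_zero, by simpa using Nat.sub_ne_zero_of_lt hij⟩)
  all_goals exact Subgroup.closure_mono (Set.singleton_subset_iff.2 (Set.mem_insert _ _))
end

section
/- Let F₃ = FreeGroup (Fin 3) with free generators a, b, c. For all natural numbers i < j, the group homomorphism FreeGroup (Fin 3) →* FreeGroup (Fin 3) determined by sending the three free generators to a, bⁱ·c, and bʲ·c respectively is injective; equivalently, {a, bⁱc, bʲc} is a free basis of the rank-3 free subgroup it generates. -/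
open FreeGroup

private lemma head_cons_mul {α : Type*} [DecidableEq α] (x : α × Bool) (w : FreeGroup α)
    (h : w.toWord.head? ≠ some (x.1, !x.2)) :
    (FreeGroup.mk [x] * w).toWord = x :: w.toWord := by
  conv_lhs => rw [← FreeGroup.mk_toWord (x := w)]
  rw [FreeGroup.mul_mk, FreeGroup.toWord_mk, List.singleton_append, FreeGroup.reduce.cons,
    FreeGroup.reduce_toWord]
  cases hw : w.toWord with
  | nil => rfl
  | cons hd tl =>
    obtain ⟨y, b⟩ := hd
    have hne : ¬(x.1 = (y, b).1 ∧ x.2 = !(y, b).2) := by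
      rintro ⟨h1, h2⟩
      exact h (by rw [hw]; simp at h1 h2; simp [h1, h2])
    exact if_neg hne

private lemma head_pow_mul {α : Type*} [DecidableEq α] (x : α) (b : Bool) {n : ℕ} (hn : n ≠ 0) (w : FreeGroup α)
    (h : w.toWord.head? ≠ some (x, !b)) :
    ((FreeGroup.mk [(x, b)]) ^ n * w).toWord.head? = some (x, b) := by
  induction n with
  | zero => exact absurd rfl hn
  | succ n ih =>
    rcases Nat.eq_zero_or_pos n with rfl | hn'
    · rw [pow_one, head_cons_mul (x, b) w h, List.head?_cons]
    · rw [pow_succ', mul_assoc,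
        head_cons_mul (x, b) _ (by rw [ih hn'.ne']; cases b <;> simp), List.head?_cons]

private lemma inv_of_eq {α : Type*} [DecidableEq α] (x : α) :
    (FreeGroup.of x)⁻¹ = FreeGroup.mk [(x, false)] := by
  apply FreeGroup.toWord_injective
  rw [FreeGroup.toWord_inv, FreeGroup.toWord_of, FreeGroup.toWord_mk]
  simp [FreeGroup.invRev]

private lemma mu_injective {k : ℕ} (hk : k ≠ 0) :
    Function.Injective
      (FreeGroup.lift ![FreeGroup.of (0 : Fin 3), FreeGroup.of (1 : Fin 3),
        FreeGroup.of (2 : Fin 3) ^ k] : FreeGroup (Fin 3) →* FreeGroup (Fin 3)) := by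
  have hfun : ![FreeGroup.of (0 : Fin 3), FreeGroup.of (1 : Fin 3), FreeGroup.of (2 : Fin 3) ^ k]
      = fun m => FreeGroup.of m ^ (![1, 1, k] m) := by
    funext m; fin_cases m <;> simp
  rw [hfun]
  have hexp : ∀ m : Fin 3, (![1, 1, k] m) ≠ 0 := by
    intro m; fin_cases m <;> simp [hk]
  apply FreeGroup.injective_lift_of_ping_pong _
    (fun m => {w : FreeGroup (Fin 3) | w.toWord.head? = some (m, true)})
    (fun m => {w : FreeGroup (Fin 3) | w.toWord.head? = some (m, false)})
  · exact fun m => ⟨FreeGroup.of m, by simp [FreeGroup.toWord_of]⟩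
  · intro m m' hmm'
    rw [Function.onFun, Set.disjoint_left]
    rintro w h1 h2
    simp only [Set.mem_setOf_eq] at h1 h2
    rw [h1] at h2
    exact hmm' (by simpa using h2)
  · intro m m' hmm'
    rw [Function.onFun, Set.disjoint_left]
    rintro w h1 h2
    simp only [Set.mem_setOf_eq] at h1 h2
    rw [h1] at h2
    exact hmm' (by simpa using h2)
  · intro m m'
    rw [Set.disjoint_left]
    rintro w h1 h2
    simp only [Set.mem_setOf_eq] at h1 h2
    rw [h1] at h2
    simp at h2
  · intro m
    rintro _ ⟨w, hw, rfl⟩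
    simp only [Set.mem_compl_iff, Set.mem_setOf_eq] at hw
    show ((FreeGroup.of m ^ (![1,1,k] m)) * w).toWord.head? = some (m, true)
    have : FreeGroup.of m = FreeGroup.mk [(m, true)] := rfl
    rw [this]
    exact head_pow_mul m true (hexp m) w (by simpa using hw)
  · intro m
    rintro _ ⟨w, hw, rfl⟩
    simp only [Set.mem_compl_iff, Set.mem_setOf_eq] at hw
    show ((FreeGroup.of m ^ (![1,1,k] m))⁻¹ * w).toWord.head? = some (m, false)
    rw [← inv_pow, inv_of_eq]
    exact head_pow_mul m false (hexp m) w (by simpa using hw)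

/-- In the free group `F₃ = ⟨a, b, c⟩`, for naturals `i < j`, the endomorphism
sending the generators to `a`, `bⁱc`, `bʲc` is injective; i.e. `{a, bⁱc, bʲc}`
is a free basis of the rank-3 free subgroup it generates. -/
theorem lift_injective_of_lt {i j : ℕ} (hij : i < j) :
    Function.Injective
      (FreeGroup.lift
        ![FreeGroup.of (0 : Fin 3),
          (FreeGroup.of (1 : Fin 3)) ^ i * FreeGroup.of (2 : Fin 3),
          (FreeGroup.of (1 : Fin 3)) ^ j * FreeGroup.of (2 : Fin 3)] :
        FreeGroup (Fin 3) →* FreeGroup (Fin 3)) := by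
  set k := j - i with hkdef
  have hk : k ≠ 0 := by omega
  have hik : i + k = j := by omega
  set o : Fin 3 → FreeGroup (Fin 3) := FreeGroup.of with ho
  let β : FreeGroup (Fin 3) →* FreeGroup (Fin 3) := FreeGroup.lift ![o 0, o 1, o 1 ^ i * o 2]
  let β' : FreeGroup (Fin 3) →* FreeGroup (Fin 3) := FreeGroup.lift ![o 0, o 1, (o 1 ^ i)⁻¹ * o 2]
  let s : FreeGroup (Fin 3) →* FreeGroup (Fin 3) := FreeGroup.lift ![o 0, o 2, o 1]
  let μ : FreeGroup (Fin 3) →* FreeGroup (Fin 3) := FreeGroup.lift ![o 0, o 1, o 2 ^ k]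
  let ε : FreeGroup (Fin 3) →* FreeGroup (Fin 3) := FreeGroup.lift ![o 0, o 1, o 2 * o 1]
  let ε' : FreeGroup (Fin 3) →* FreeGroup (Fin 3) := FreeGroup.lift ![o 0, o 1, o 2 * (o 1)⁻¹]
  have hβ : β'.comp β = MonoidHom.id _ := by
    ext m; fin_cases m <;> simp [β, β', o]
  have hε : ε'.comp ε = MonoidHom.id _ := by
    ext m; fin_cases m <;> simp [ε, ε', o]
  have hs : s.comp s = MonoidHom.id _ := by
    ext m; fin_cases m <;> simp [s, o]
  have hβinj : Function.Injective β :=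
    Function.LeftInverse.injective (g := β') fun x => by
      rw [← MonoidHom.comp_apply, hβ, MonoidHom.id_apply]
  have hεinj : Function.Injective ε :=
    Function.LeftInverse.injective (g := ε') fun x => by
      rw [← MonoidHom.comp_apply, hε, MonoidHom.id_apply]
  have hsinj : Function.Injective s :=
    Function.LeftInverse.injective (g := s) fun x => by
      rw [← MonoidHom.comp_apply, hs, MonoidHom.id_apply]
  have hμinj : Function.Injective μ := mu_injective hk
  have hcomp : β.comp (s.comp (μ.comp ε)) =
      (FreeGroup.lift
        ![FreeGroup.of (0 : Fin 3),
          (FreeGroup.of (1 : Fin 3)) ^ i * FreeGroup.of (2 : Fin 3),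
          (FreeGroup.of (1 : Fin 3)) ^ j * FreeGroup.of (2 : Fin 3)]) := by
    ext m; fin_cases m <;>
      simp [β, s, μ, ε, o, ← mul_assoc, ← pow_add, Nat.add_comm k i, hik]
  rw [← hcomp, MonoidHom.coe_comp, MonoidHom.coe_comp, MonoidHom.coe_comp]
  exact hβinj.comp (hsinj.comp (hμinj.comp hεinj))
end

section
/- Let Σ be a type with a symmetric irreflexive relation C, let k ∈ ℕ, let w : Fin k → Σ, and let R(w), ≺, ≺ᵐ be as in the context. Then the relation ≺ on indices equals the transitive closure of the relation ≺ᵐ. -/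
/-- `CommMoves C w σ` says the permutation `σ` of the positions of the word
`w : Fin k → S` is obtained from the identity by a sequence of commutation moves:
if `σ` is reachable, `u = w ∘ σ⁻¹` is the rearranged word, and `p`, `q = p+1` are
consecutive positions with `C (u p) (u q)`, then swapping the letters in positions
`p` and `q` (i.e. `σ.trans (Equiv.swap p q)`) is reachable. -/
inductive CommMoves {S : Type*} (C : S → S → Prop) {k : ℕ} (w : Fin k → S) :
    Equiv.Perm (Fin k) → Prop
  | refl : CommMoves C w (Equiv.refl (Fin k))
  | move {σ : Equiv.Perm (Fin k)} (hσ : CommMoves C w σ) (p q : Fin k)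
      (hq : (q : ℕ) = (p : ℕ) + 1) (hC : C (w (σ.symm p)) (w (σ.symm q))) :
      CommMoves C w (σ.trans (Equiv.swap p q))

namespace CommMovesAux

variable {S : Type*} {C : S → S → Prop} {k : ℕ} {w : Fin k → S}

/-- The strict order `≺`. -/
def Prec (C : S → S → Prop) (w : Fin k → S) (i j : Fin k) : Prop :=
  ∀ σ : Equiv.Perm (Fin k), CommMoves C w σ → σ i < σ j

lemma Prec.lt {i j : Fin k} (h : Prec C w i j) : i < j := by
  simpa using h (Equiv.refl _) CommMoves.refl

lemma Prec.irrefl (i : Fin k) : ¬ Prec C w i i := fun h => lt_irrefl _ h.lt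

lemma Prec.trans {i j l : Fin k} (h1 : Prec C w i j) (h2 : Prec C w j l) :
    Prec C w i l := fun σ hσ => (h1 σ hσ).trans (h2 σ hσ)

/-- An adjacent transposition of positions `p`, `q = p+1` preserves the relative
order of any two positions except the pair `(p, q)` itself. -/
lemma swap_lt {p q s t : Fin k} (hq : (q : ℕ) = (p : ℕ) + 1) (hst : s < t)
    (h : ¬(s = p ∧ t = q)) : Equiv.swap p q s < Equiv.swap p q t := by
  have hst' : (s : ℕ) < (t : ℕ) := hst
  by_cases hsp : s = p
  · subst hsp
    have htq : t ≠ q := fun ht => h ⟨rfl, ht⟩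
    have htq' : (t : ℕ) ≠ (q : ℕ) := fun hh => htq (Fin.ext hh)
    have hts : t ≠ s := fun hh => absurd hh.symm (ne_of_lt hst)
    rw [Equiv.swap_apply_left, Equiv.swap_apply_of_ne_of_ne hts htq]
    change (q : ℕ) < (t : ℕ); omega
  · by_cases hsq : s = q
    · subst hsq
      have htp : t ≠ p := fun hh => by
        have : (t : ℕ) = (p : ℕ) := congrArg Fin.val hh; omega
      have hts : t ≠ s := fun hh => absurd hh.symm (ne_of_lt hst)
      rw [Equiv.swap_apply_right, Equiv.swap_apply_of_ne_of_ne htp hts]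
      change (p : ℕ) < (t : ℕ); omega
    · have hsp' : (s : ℕ) ≠ (p : ℕ) := fun hh => hsp (Fin.ext hh)
      have hsq' : (s : ℕ) ≠ (q : ℕ) := fun hh => hsq (Fin.ext hh)
      by_cases htp : t = p
      · subst htp
        rw [Equiv.swap_apply_left, Equiv.swap_apply_of_ne_of_ne hsp hsq]
        change (s : ℕ) < (q : ℕ); omega
      · by_cases htq : t = q
        · subst htq
          rw [Equiv.swap_apply_right, Equiv.swap_apply_of_ne_of_ne hsp hsq]
          change (s : ℕ) < (p : ℕ); omega
        · rw [Equiv.swap_apply_of_ne_of_ne hsp hsq,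
            Equiv.swap_apply_of_ne_of_ne htp htq]
          exact hst

/-- If a reachable permutation reverses the original (identity) order of `x`, `y`,
then their letters commute. -/
lemma comm_of_rev {τ : Equiv.Perm (Fin k)} (hτ : CommMoves C w τ) :
    ∀ x y : Fin k, x < y → τ y < τ x → C (w x) (w y) := by
  induction hτ with
  | refl =>
    intro x y hxy hyx
    simp only [Equiv.refl_apply] at hyx
    exact absurd hyx (asymm hxy)
  | @move σ hσ p q hq hC ih =>
    intro x y hxy hlt
    simp only [Equiv.trans_apply] at hlt
    rcases lt_or_ge (σ x) (σ y) with h1 | h1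
    · by_cases hp : σ x = p ∧ σ y = q
      · obtain ⟨hxp, hyq⟩ := hp
        have hx : x = σ.symm p := by rw [← hxp]; simp
        have hy : y = σ.symm q := by rw [← hyq]; simp
        rw [hx, hy]; exact hC
      · exact absurd (swap_lt hq h1 hp) (asymm hlt)
    · have hne : σ y ≠ σ x := fun hh =>
        (ne_of_lt hxy) (σ.injective hh).symm
      exact ih x y hxy (lt_of_le_of_ne h1 hne)

/-- If two reachable permutations order `x`, `y` oppositely, their letters commute. -/
lemma comm_of_opp (hsymm : Symmetric C) {σ τ : Equiv.Perm (Fin k)}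
    (hσ : CommMoves C w σ) (hτ : CommMoves C w τ) {x y : Fin k}
    (h1 : σ x < σ y) (h2 : τ y < τ x) : C (w x) (w y) := by
  have hne : x ≠ y := fun hh => by subst hh; exact lt_irrefl _ h1
  rcases lt_or_gt_of_ne hne with h | h
  · exact comm_of_rev hτ x y h h2
  · exact hsymm (comm_of_rev hσ y x h h1)

lemma strictMono_of_succ {α : Type*} [Preorder α] {f : Fin k → α}
    (h : ∀ a b : Fin k, (b : ℕ) = (a : ℕ) + 1 → f a < f b) : StrictMono f := by
  suffices h2 : ∀ d (a b : Fin k), (b : ℕ) = (a : ℕ) + d + 1 → f a < f b by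
    intro a b hab
    have hab' : (a : ℕ) < (b : ℕ) := hab
    exact h2 ((b : ℕ) - (a : ℕ) - 1) a b (by omega)
  intro d
  induction d with
  | zero => intro a b hb; exact h a b (by omega)
  | succ d ih =>
    intro a b hb
    have hlt : (a : ℕ) + d + 1 < k := by have := b.isLt; omega
    have h1 : f a < f ⟨(a : ℕ) + d + 1, hlt⟩ := ih a _ rfl
    exact h1.trans (h _ b (by simp; omega))

/-- If a permutation has no "adjacent descent" relative to `π`, it equals `π`. -/
lemma eq_of_no_descent {σ π : Equiv.Perm (Fin k)}
    (h : ∀ x y : Fin k, (σ y : ℕ) = (σ x : ℕ) + 1 → ¬ π y < π x) : σ = π := by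
  have hmono : StrictMono (fun a => π (σ.symm a)) := by
    apply strictMono_of_succ
    intro a b hab
    have hne : σ.symm a ≠ σ.symm b := by
      intro hh
      have := congrArg σ hh
      simp at this
      subst this; omega
    have := h (σ.symm a) (σ.symm b) (by simp [hab])
    exact lt_of_le_of_ne (not_lt.mp this) fun hh => hne (π.injective hh)
  set e : Equiv.Perm (Fin k) := σ.symm.trans π with he
  have hmono' : StrictMono ⇑e := hmono
  have hsymmmono : StrictMono ⇑e.symm := by
    intro a b hab
    rcases lt_trichotomy (e.symm a) (e.symm b) with h' | h' | h'
    · exact h'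
    · exact absurd (congrArg e h') (by simp; exact ne_of_lt hab)
    · have := hmono' h'
      simp at this
      exact absurd hab (asymm this)
  haveI : WellFoundedLT (Fin k) := inferInstance
  have hid : ∀ x, e x = x := by
    intro x
    have h1 : x ≤ e x := hmono'.le_apply
    have h2 : e x ≤ x := by
      have := hsymmmono.le_apply (x := e x)
      simpa using this
    exact le_antisymm h2 h1
  ext y
  have := hid (σ y)
  simp [he] at this
  exact congrArg Fin.val this.symm

/-- Completeness: every permutation that respects `≺` is reachable. -/
lemma reachable_of_ext (hsymm : Symmetric C) (π : Equiv.Perm (Fin k))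
    (hπ : ∀ x y, Prec C w x y → π x < π y) : CommMoves C w π := by
  classical
  suffices h : ∀ n (σ : Equiv.Perm (Fin k)), CommMoves C w σ →
      (Finset.univ.filter fun ab : Fin k × Fin k =>
        σ ab.1 < σ ab.2 ∧ π ab.2 < π ab.1).card ≤ n →
      CommMoves C w π from
    h _ _ CommMoves.refl le_rfl
  intro n
  induction n with
  | zero =>
    intro σ hσ hcard
    have hempty : ∀ x y : Fin k, σ x < σ y → ¬ π y < π x := by
      intro x y h1 h2
      have : (x, y) ∈ Finset.univ.filter fun ab : Fin k × Fin k =>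
          σ ab.1 < σ ab.2 ∧ π ab.2 < π ab.1 := by
        simp [h1, h2]
      have := Finset.card_pos.mpr ⟨_, this⟩
      omega
    have : σ = π := by
      apply eq_of_no_descent
      intro x y hxy
      exact hempty x y (by change (σ x : ℕ) < (σ y : ℕ); omega)
    rwa [this] at hσ
  | succ n ih =>
    intro σ hσ hcard
    by_cases hσπ : σ = π
    · rwa [hσπ] at hσ
    · -- find an adjacent descent
      have hdesc : ∃ x y : Fin k, (σ y : ℕ) = (σ x : ℕ) + 1 ∧ π y < π x := by
        by_contra hcon
        push_neg at hcon
        exact hσπ (eq_of_no_descent fun x y h1 => not_lt.mpr (hcon x y h1))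
      obtain ⟨x, y, hadj, hdec⟩ := hdesc
      have hσxy : σ x < σ y := by change (σ x : ℕ) < (σ y : ℕ); omega
      have hxy : x ≠ y := fun hh => by subst hh; exact lt_irrefl _ hσxy
      -- x and y are incomparable in ≺, hence their letters commute
      have hnp : ¬ Prec C w x y := fun hp => absurd (hπ x y hp) (asymm hdec)
      rw [Prec] at hnp
      push_neg at hnp
      obtain ⟨τ, hτ, hτxy⟩ := hnp
      have hτyx : τ y < τ x :=
        lt_of_le_of_ne hτxy fun hh => hxy (τ.injective hh).symm
      have hC : C (w x) (w y) := comm_of_opp hsymm hσ hτ hσxy hτyx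
      -- perform the move
      have hC' : C (w (σ.symm (σ x))) (w (σ.symm (σ y))) := by simpa using hC
      have hmove := CommMoves.move hσ (σ x) (σ y) hadj hC'
      set σ' := σ.trans (Equiv.swap (σ x) (σ y)) with hσ'def
      apply ih σ' hmove
      -- inversion count strictly decreased
      have hsub : (Finset.univ.filter fun ab : Fin k × Fin k =>
          σ' ab.1 < σ' ab.2 ∧ π ab.2 < π ab.1) ⊆
          (Finset.univ.filter fun ab : Fin k × Fin k =>
          σ ab.1 < σ ab.2 ∧ π ab.2 < π ab.1) := by
        intro ab hab
        simp only [Finset.mem_filter, Finset.mem_univ, true_and] at hab ⊢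
        obtain ⟨h1, h2⟩ := hab
        refine ⟨?_, h2⟩
        have h1' : Equiv.swap (σ x) (σ y) (σ ab.1) < Equiv.swap (σ x) (σ y) (σ ab.2) := h1
        by_cases hcase : Equiv.swap (σ x) (σ y) (σ ab.1) = σ x ∧
            Equiv.swap (σ x) (σ y) (σ ab.2) = σ y
        · -- then ab = (y, x), contradicting π order
          exfalso
          have ha1 : σ ab.1 = σ y := by
            have := congrArg (Equiv.swap (σ x) (σ y)) hcase.1
            simpa using this
          have ha2 : σ ab.2 = σ x := by
            have := congrArg (Equiv.swap (σ x) (σ y)) hcase.2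
            simpa using this
          have hb1 : ab.1 = y := σ.injective ha1
          have hb2 : ab.2 = x := σ.injective ha2
          rw [hb1, hb2] at h2
          exact absurd h2 (asymm hdec)
        · have := swap_lt hadj h1' hcase
          simpa [Equiv.swap_apply_self] using this
      have hmem : (x, y) ∈ (Finset.univ.filter fun ab : Fin k × Fin k =>
          σ ab.1 < σ ab.2 ∧ π ab.2 < π ab.1) := by simp [hσxy, hdec]
      have hnmem : (x, y) ∉ (Finset.univ.filter fun ab : Fin k × Fin k =>
          σ' ab.1 < σ' ab.2 ∧ π ab.2 < π ab.1) := by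
        simp only [Finset.mem_filter, Finset.mem_univ, true_and, not_and]
        intro h1
        exfalso
        have hx' : σ' x = σ y := by simp [hσ'def]
        have hy' : σ' y = σ x := by simp [hσ'def]
        rw [hx', hy'] at h1
        exact absurd h1 (asymm hσxy)
      have hss := Finset.card_lt_card
        ((Finset.ssubset_iff_of_subset hsub).mpr ⟨(x, y), hmem, hnmem⟩)
      omega

/-- The covering case: if `i ≺ j` with nothing strictly between, then `i`, `j`
are adjacent in some reachable permutation. -/
lemma adj_of_cover (hsymm : Symmetric C) {i j : Fin k} (hij : Prec C w i j)
    (hcov : ∀ x, ¬(Prec C w i x ∧ Prec C w x j)) :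
    ∃ π : Equiv.Perm (Fin k), CommMoves C w π ∧ (π j : ℕ) = (π i : ℕ) + 1 := by
  classical
  have hijne : i ≠ j := fun hh => Prec.irrefl i (by rw [← hh] at hij; exact hij)
  set c : Fin k → ℕ := fun x =>
    if Prec C w x j ∧ x ≠ i then 0 else if x = i then 1 else if x = j then 2 else 3
    with hc
  set key : Fin k → ℕ := fun x => c x * k + (x : ℕ) with hkey
  have hkeylt : ∀ x y : Fin k, c x < c y → key x < key y := by
    intro x y h
    have h1 : (c x + 1) * k ≤ c y * k := Nat.mul_le_mul_right k h
    have := x.isLt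
    simp only [hkey]
    nlinarith [y.2]
  have hc0 : ∀ x, Prec C w x j → x ≠ i → c x = 0 := by
    intro x h1 h2
    simp only [hc]
    rw [if_pos ⟨h1, h2⟩]
  have hc1 : c i = 1 := by
    have h1 : ¬(Prec C w i j ∧ i ≠ i) := fun hh => hh.2 rfl
    simp only [hc]
    rw [if_neg h1]
    simp
  have hc2 : c j = 2 := by
    have h1 : ¬(Prec C w j j ∧ j ≠ i) := fun hh => Prec.irrefl j hh.1
    have h2 : j ≠ i := fun hh => hijne hh.symm
    simp only [hc]
    rw [if_neg h1, if_neg h2]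
    simp
  have hcval : ∀ x, ((Prec C w x j ∧ x ≠ i) ∧ c x = 0) ∨ (x = i ∧ c x = 1) ∨
      (x = j ∧ c x = 2) ∨ c x = 3 := by
    intro x
    simp only [hc]
    split_ifs with h1 h2 h3
    · exact Or.inl ⟨h1, rfl⟩
    · exact Or.inr (Or.inl ⟨h2, rfl⟩)
    · exact Or.inr (Or.inr (Or.inl ⟨h3, rfl⟩))
    · exact Or.inr (Or.inr (Or.inr rfl))
  have hcle3 : ∀ x, c x ≤ 3 := by
    intro x
    simp only [hc]
    split_ifs <;> omega
  have hkeymono : ∀ x y : Fin k, Prec C w x y → key x < key y := by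
    intro x y hxy
    have hvlt : (x : ℕ) < (y : ℕ) := hxy.lt
    have hcle : c x ≤ c y := by
      rcases hcval y with ⟨⟨hyj', hyi⟩, hy⟩ | ⟨hyi, hy⟩ | ⟨hyj, hy⟩ | hy
      · have hxi : x ≠ i := by
          rintro rfl
          exact hcov y ⟨hxy, hyj'⟩
        have := hc0 x (hxy.trans hyj') hxi
        omega
      · have hxy' : Prec C w x j := by
          have h := hxy
          rw [hyi] at h
          exact h.trans hij
        have hxi : x ≠ i := by
          rintro rfl
          rw [hyi] at hxy
          exact Prec.irrefl _ hxy
        have := hc0 x hxy' hxi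
        omega
      · have hxy' : Prec C w x j := by
          have h := hxy
          rwa [hyj] at h
        by_cases hxi : x = i
        · rw [hxi, hc1]; omega
        · have := hc0 x hxy' hxi
          omega
      · have := hcle3 x
        omega
    rcases lt_or_eq_of_le hcle with h | h
    · exact hkeylt x y h
    · simp only [hkey]; rw [h]; omega
  have hkeyinj : Function.Injective key := by
    intro x y hk
    rcases lt_trichotomy (c x) (c y) with h | h | h
    · exact absurd hk (ne_of_lt (hkeylt x y h))
    · have : (x : ℕ) = (y : ℕ) := by simp only [hkey] at hk; rw [h] at hk; omega
      exact Fin.ext this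
    · exact absurd hk.symm (ne_of_lt (hkeylt y x h))
  set π : Equiv.Perm (Fin k) := (Tuple.sort key)⁻¹ with hπdef
  have hsortapp : ∀ r, Tuple.sort key (π r) = r := by
    intro r; simp [hπdef]
  have hg : StrictMono (key ∘ Tuple.sort key) :=
    (Tuple.monotone_sort key).strictMono_of_injective
      (hkeyinj.comp (Tuple.sort key).injective)
  have hπmono : ∀ x y : Fin k, key x < key y → π x < π y := by
    intro x y h
    by_contra hcon
    push_neg at hcon
    rcases lt_or_eq_of_le hcon with h' | h'
    · have := hg h'
      simp only [Function.comp_apply, hsortapp] at this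
      omega
    · have : y = x := π.injective h'
      subst this; omega
  have hext : ∀ x y, Prec C w x y → π x < π y := fun x y h =>
    hπmono x y (hkeymono x y h)
  refine ⟨π, reachable_of_ext hsymm π hext, ?_⟩
  have hπij : π i < π j := hext i j hij
  -- no rank strictly between π i and π j
  have hnomid : ∀ r : Fin k, π i < r → r < π j → False := by
    intro r h1 h2
    set z := Tuple.sort key r with hz
    have hk1 : key i < key z := by
      have := hg h1
      simpa [Function.comp, hsortapp, hz] using this
    have hk2 : key z < key j := by
      have := hg h2
      simpa [Function.comp, hsortapp, hz] using this
    have hkeyi : key i = 1 * k + (i : ℕ) := by simp only [hkey]; rw [hc1]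
    have hkeyj : key j = 2 * k + (j : ℕ) := by simp only [hkey]; rw [hc2]
    have hkeyz : key z = c z * k + (z : ℕ) := by simp only [hkey]
    have hzlt := z.isLt
    have hilt := i.isLt
    have hjlt := j.isLt
    rcases hcval z with ⟨-, h0⟩ | ⟨hzi, h0⟩ | ⟨hzj, h0⟩ | h0
    · rw [h0] at hkeyz; omega
    · rw [hzi] at hk1; omega
    · rw [hzj] at hk2; omega
    · rw [h0] at hkeyz; omega
  by_contra hne
  have h1 : π i < π j := hπij
  have h1' : (π i : ℕ) < (π j : ℕ) := h1
  have h2 : (π i : ℕ) + 1 < (π j : ℕ) := by omega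
  have hr : (π i : ℕ) + 1 < k := lt_trans h2 (π j).isLt
  exact hnomid ⟨(π i : ℕ) + 1, hr⟩ (by simp [Fin.lt_def]) (by simp [Fin.lt_def]; omega)

end CommMovesAux
/-- The strict partial order `≺` on the indices of `w` (`i ≺ j` iff `σ i < σ j` for
every reachable rearrangement `σ`) is the transitive closure of the relation `≺ᵐ`
(`i ≺ᵐ j` iff `i ≺ j` and moreover `i`, `j` are adjacent, in this order, in some
reachable rearrangement). -/
theorem prec_eq_transGen_precM {S : Type*} (C : S → S → Prop)
    (hsymm : Symmetric C) (hirr : Irreflexive C) {k : ℕ} (w : Fin k → S) :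
    (fun i j : Fin k => ∀ σ : Equiv.Perm (Fin k), CommMoves C w σ → σ i < σ j) =
      Relation.TransGen (fun i j : Fin k =>
        (∀ σ : Equiv.Perm (Fin k), CommMoves C w σ → σ i < σ j) ∧
        ∃ σ : Equiv.Perm (Fin k), CommMoves C w σ ∧ ((σ j : ℕ) = (σ i : ℕ) + 1)) := by
  classical
  funext i j
  apply propext
  constructor
  · intro hij
    have main : ∀ n (a b : Fin k), CommMovesAux.Prec C w a b →
        (Finset.univ.filter fun x =>
          CommMovesAux.Prec C w a x ∧ CommMovesAux.Prec C w x b).card ≤ n →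
        Relation.TransGen (fun i j : Fin k =>
          (∀ σ : Equiv.Perm (Fin k), CommMoves C w σ → σ i < σ j) ∧
          ∃ σ : Equiv.Perm (Fin k), CommMoves C w σ ∧
            ((σ j : ℕ) = (σ i : ℕ) + 1)) a b := by
      intro n
      induction n with
      | zero =>
        intro a b hab hcard
        have hcov : ∀ x, ¬(CommMovesAux.Prec C w a x ∧ CommMovesAux.Prec C w x b) := by
          intro x hx
          have hmem : x ∈ Finset.univ.filter fun x =>
              CommMovesAux.Prec C w a x ∧ CommMovesAux.Prec C w x b :=
            Finset.mem_filter.mpr ⟨Finset.mem_univ x, hx⟩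
          have := Finset.card_pos.mpr ⟨x, hmem⟩
          omega
        obtain ⟨π, hπ, hadj⟩ := CommMovesAux.adj_of_cover hsymm hab hcov
        exact Relation.TransGen.single ⟨hab, π, hπ, hadj⟩
      | succ n ih =>
        intro a b hab hcard
        by_cases hem : (Finset.univ.filter fun x =>
            CommMovesAux.Prec C w a x ∧ CommMovesAux.Prec C w x b).card = 0
        · have hcov : ∀ x, ¬(CommMovesAux.Prec C w a x ∧ CommMovesAux.Prec C w x b) := by
            intro x hx
            have hmem : x ∈ Finset.univ.filter fun x =>
                CommMovesAux.Prec C w a x ∧ CommMovesAux.Prec C w x b :=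
              Finset.mem_filter.mpr ⟨Finset.mem_univ x, hx⟩
            have := Finset.card_pos.mpr ⟨x, hmem⟩
            omega
          obtain ⟨π, hπ, hadj⟩ := CommMovesAux.adj_of_cover hsymm hab hcov
          exact Relation.TransGen.single ⟨hab, π, hπ, hadj⟩
        · obtain ⟨x, hxmem⟩ := Finset.card_pos.mp (Nat.pos_of_ne_zero hem)
          obtain ⟨hax, hxb⟩ := (Finset.mem_filter.mp hxmem).2
          -- the two subintervals are strictly smaller
          have hsub1 : (Finset.univ.filter fun z =>
              CommMovesAux.Prec C w a z ∧ CommMovesAux.Prec C w z x) ⊆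
              (Finset.univ.filter fun z =>
              CommMovesAux.Prec C w a z ∧ CommMovesAux.Prec C w z b) := by
            intro z hz
            obtain ⟨h1, h2⟩ := (Finset.mem_filter.mp hz).2
            exact Finset.mem_filter.mpr ⟨Finset.mem_univ z, h1, h2.trans hxb⟩
          have hxn1 : x ∉ (Finset.univ.filter fun z =>
              CommMovesAux.Prec C w a z ∧ CommMovesAux.Prec C w z x) := by
            intro hmem
            exact CommMovesAux.Prec.irrefl x (Finset.mem_filter.mp hmem).2.2
          have hlt1 := Finset.card_lt_card
            ((Finset.ssubset_iff_of_subset hsub1).mpr ⟨x, hxmem, hxn1⟩)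
          have hsub2 : (Finset.univ.filter fun z =>
              CommMovesAux.Prec C w x z ∧ CommMovesAux.Prec C w z b) ⊆
              (Finset.univ.filter fun z =>
              CommMovesAux.Prec C w a z ∧ CommMovesAux.Prec C w z b) := by
            intro z hz
            obtain ⟨h1, h2⟩ := (Finset.mem_filter.mp hz).2
            exact Finset.mem_filter.mpr ⟨Finset.mem_univ z, hax.trans h1, h2⟩
          have hxn2 : x ∉ (Finset.univ.filter fun z =>
              CommMovesAux.Prec C w x z ∧ CommMovesAux.Prec C w z b) := by
            intro hmem
            exact CommMovesAux.Prec.irrefl x (Finset.mem_filter.mp hmem).2.1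
          have hlt2 := Finset.card_lt_card
            ((Finset.ssubset_iff_of_subset hsub2).mpr ⟨x, hxmem, hxn2⟩)
          exact Relation.TransGen.trans
            (ih a x hax (by omega)) (ih x b hxb (by omega))
    exact main _ i j hij le_rfl
  · intro h
    induction h with
    | single h => exact h.1
    | tail _ h ih => exact fun σ hσ => lt_trans (ih σ hσ) (h.1 σ hσ)
end

section
/- Let Σ be a type with a symmetric irreflexive relation C, let k ∈ ℕ, let w : Fin k → Σ, and let R(w) and ≺ be as in the context. If i ≠ j are indices of w such that neither i ≺ j nor j ≺ i, then C (w i) (w j) holds; in particular, since C is irreflexive, w i ≠ w j. Hence any set of pairwise ≺-incomparable indices carries pairwise distinct, pairwise C-related letters. -/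
lemma comm_aux {S : Type*} (C : S → S → Prop) {k : ℕ} (w : Fin k → S)
    {i j : Fin k} (hlt : i < j) :
    ∀ σ : Equiv.Perm (Fin k), CommMoves C w σ → σ j < σ i → C (w i) (w j) := by
  intro σ hσ
  induction hσ with
  | refl => exact fun h => absurd hlt (by simpa using h.asymm)
  | @move σ hσ p q hq hC ih =>
    intro h
    by_cases hji : σ j < σ i
    · exact ih hji
    · have hne : σ i ≠ σ j := fun e => hlt.ne (σ.injective e)
      have hab : σ i < σ j := lt_of_le_of_ne (not_lt.1 hji) hne
      have h' : Equiv.swap p q (σ j) < Equiv.swap p q (σ i) := h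
      have key : σ i = p ∧ σ j = q := by
        rw [Equiv.swap_apply_def, Equiv.swap_apply_def] at h'
        have hab' : (σ i : ℕ) < (σ j : ℕ) := hab
        split_ifs at h' with h1 h2 h3 h4 h5 h6 h7 h8 <;>
          first
          | exact ⟨by assumption, by assumption⟩
          | (exfalso;
             simp only [Fin.lt_def] at h';
             simp only [Fin.ext_iff] at *;
             omega)
      have e1 : σ.symm p = i := by rw [← key.1, Equiv.symm_apply_apply]
      have e2 : σ.symm q = j := by rw [← key.2, Equiv.symm_apply_apply]
      rwa [e1, e2] at hC


/-- If two distinct indices `i ≠ j` of the word `w` are incomparable in the strict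
partial order `≺` (where `i ≺ j` iff `σ i < σ j` for every reachable rearrangement
`σ`), then their letters commute: `C (w i) (w j)`; in particular, since `C` is
irreflexive, `w i ≠ w j`. Hence pairwise `≺`-incomparable indices carry pairwise
distinct, pairwise `C`-related letters. -/
theorem comm_of_unordered {S : Type*} (C : S → S → Prop)
    (hsymm : Symmetric C) (hirr : Irreflexive C) {k : ℕ} (w : Fin k → S)
    (i j : Fin k) (hij : i ≠ j)
    (h₁ : ¬ ∀ σ : Equiv.Perm (Fin k), CommMoves C w σ → σ i < σ j)
    (h₂ : ¬ ∀ σ : Equiv.Perm (Fin k), CommMoves C w σ → σ j < σ i) :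
    C (w i) (w j) ∧ w i ≠ w j := by
  have hC : C (w i) (w j) := by
    rcases lt_or_gt_of_ne hij with hlt | hlt
    · push_neg at h₁
      obtain ⟨σ, hσ, hn⟩ := h₁
      have hne : σ i ≠ σ j := fun e => hij (σ.injective e)
      exact comm_aux C w hlt σ hσ (lt_of_le_of_ne hn hne.symm)
    · push_neg at h₂
      obtain ⟨σ, hσ, hn⟩ := h₂
      have hne : σ j ≠ σ i := fun e => hij.symm (σ.injective e)
      exact hsymm (comm_aux C w hlt σ hσ (lt_of_le_of_ne hn hne.symm))
  exact ⟨hC, fun e => hirr (w i) (by nth_rewrite 2 [e]; exact hC)⟩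
end
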